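/- Participation noise breaks the tie between ACD and ACC in favour of ACD: for Π ∈ {Π_R, Π_P} with any real T, R, P, S, any ε, any u, any α ∈ [0,1], and any χ ∈ [0,1], the noisy payoff matrix Π̃ satisfies the exact identity Π̃(ACD,ACD) + Π̃(ACD,ACC) − Π̃(ACC,ACD) − Π̃(ACC,ACC) = χ(2−χ)·((T − R) + (P − S)). Consequently, if T > R and P > S, then ACD is risk-dominant against ACC under Π̃ for every χ ∈ (0,1], whereas for χ = 0 the two strategies are neutral (the left-hand side vanishes). -/

import Mathlib

/-- A strategy in the commitment game: whether to accept a prior commitment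
(`commit = true` means "A"), the action if a commitment is formed
(`inAct = true` means "C"), and the action if no commitment is formed
(`outAct = true` means "C"). -/
structure Strat where
  commit : Bool
  inAct : Bool
  outAct : Bool
deriving DecidableEq

def ACC : Strat := ⟨true, true, true⟩
def ACD : Strat := ⟨true, true, false⟩
def ADC : Strat := ⟨true, false, true⟩
def ADD : Strat := ⟨true, false, false⟩
def NCC : Strat := ⟨false, true, true⟩
def NCD : Strat := ⟨false, true, false⟩
def NDC : Strat := ⟨false, false, true⟩
def NDD : Strat := ⟨false, false, false⟩

/-- Row player's payoff in the one-shot Prisoner's Dilemma with payoffs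
`T, R, P, S`; `true` codes cooperation. -/
def pd (T R P S : ℝ) (myC otherC : Bool) : ℝ :=
  if myC then (if otherC then R else S) else (if otherC then T else P)

/-- The reward payoff matrix `Π_R`: the row player receives its PD payoff
(commitment formed iff both commit; then each pays `ε/2` and plays its
in-commitment action, otherwise both play their no-commitment actions),
plus `α·u` if it accepted the commitment, plus an additional `(1−α)·u`
if a commitment is formed and it cooperates in it. -/
noncomputable def payR (T R P S ε u α : ℝ) (s t : Strat) : ℝ :=
  (if s.commit ∧ t.commit then
      pd T R P S s.inAct t.inAct - ε / 2 + (if s.inAct then (1 - α) * u else 0)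
   else pd T R P S s.outAct t.outAct)
  + (if s.commit then α * u else 0)

/-- The punishment payoff matrix `Π_P`: as `Π_R` except that instead of the
reward `(1−α)·u` for compliance, the amount `(1−α)·u` is subtracted when a
commitment is formed and the row player defects in it. -/
noncomputable def payP (T R P S ε u α : ℝ) (s t : Strat) : ℝ :=
  (if s.commit ∧ t.commit then
      pd T R P S s.inAct t.inAct - ε / 2 - (if s.inAct then 0 else (1 - α) * u)
   else pd T R P S s.outAct t.outAct)
  + (if s.commit then α * u else 0)

/-- Flip the participation decision of a strategy (A ↔ N). -/
def flipPart (s : Strat) : Strat := ⟨!s.commit, s.inAct, s.outAct⟩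

/-- The noisy payoff matrix `Π̃`: with probability `χ` each player independently
errs in its decision whether to join the commitment. -/
noncomputable def noisy (χ : ℝ) (M : Strat → Strat → ℝ) (s t : Strat) : ℝ :=
  (1 - χ) ^ 2 * M s t + χ * (1 - χ) * (M (flipPart s) t + M s (flipPart t))
    + χ ^ 2 * M (flipPart s) (flipPart t)

/-- Strategy `a` is risk-dominant against strategy `b` under payoff matrix `Π`. -/
def RiskDom (M : Strat → Strat → ℝ) (a b : Strat) : Prop :=
  M a a + M a b > M b a + M b b

/-- `x` is an evolutionarily stable strategy (ESS) of the payoff matrix `Π`. -/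
def IsESS (M : Strat → Strat → ℝ) (x : Strat) : Prop :=
  ∀ y : Strat, y ≠ x → M x x > M y x ∨ (M x x = M y x ∧ M x y > M y y)

/-!
Both ACD and ACC accept the commitment and cooperate inside it; they differ only in what they do
when no commitment forms. Without noise a commitment always forms between them, so they are
payoff-equivalent. With participation noise `χ`, the commitment fails with probability
`1 - (1 - χ)² = χ (2 - χ)`, and then the two strategies play the ordinary Prisoner's Dilemma, where
defecting gains `T - R` against a cooperator and `P - S` against a defector. The participation bonus
depends only on one's own (noisy) participation decision, which the two strategies share.
-/

def IsCommitmentGame (T R P S : ℝ) (M : Strat → Strat → ℝ) : Prop :=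
  ∃ (inPay : Bool → Bool → ℝ) (bonus : Bool → ℝ), ∀ s t, M s t =
    if s.commit ∧ t.commit then inPay s.inAct t.inAct
    else pd T R P S s.outAct t.outAct + bonus s.commit

theorem payR_isCommitmentGame (T R P S ε u α : ℝ) :
    IsCommitmentGame T R P S (payR T R P S ε u α) := by
  refine ⟨fun a b => pd T R P S a b - ε / 2 + (if a then (1 - α) * u else 0) + α * u,
    fun c => if c then α * u else 0, fun s t => ?_⟩
  by_cases h : s.commit ∧ t.commit <;> simp [payR, h]

theorem payP_isCommitmentGame (T R P S ε u α : ℝ) :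
    IsCommitmentGame T R P S (payP T R P S ε u α) := by
  refine ⟨fun a b => pd T R P S a b - ε / 2 - (if a then 0 else (1 - α) * u) + α * u,
    fun c => if c then α * u else 0, fun s t => ?_⟩
  by_cases h : s.commit ∧ t.commit <;> simp [payP, h]

def riskDomGap (M : Strat → Strat → ℝ) (a b : Strat) : ℝ :=
  M a a + M a b - M b a - M b b

theorem riskDom_iff_riskDomGap_pos (M : Strat → Strat → ℝ) (a b : Strat) :
    RiskDom M a b ↔ 0 < riskDomGap M a b := by
  unfold RiskDom riskDomGap
  constructor <;> intro h <;> linarith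

theorem IsCommitmentGame.riskDomGap_noisy_ACD_ACC {T R P S : ℝ} {M : Strat → Strat → ℝ}
    (hM : IsCommitmentGame T R P S M) (χ : ℝ) :
    riskDomGap (noisy χ M) ACD ACC = χ * (2 - χ) * ((T - R) + (P - S)) := by
  obtain ⟨inPay, bonus, hM⟩ := hM
  simp only [riskDomGap, noisy, hM]
  simp only [ACD, ACC, flipPart, pd, Bool.not_true, Bool.false_eq_true, and_self, and_true,
    and_false, ↓reduceIte]
  ring

theorem noise_breaks_tie_ACD_ACC_general (T R P S ε u α χ : ℝ)
    (hχ : 0 ≤ χ ∧ χ ≤ 1)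
    (M : Strat → Strat → ℝ)
    (hM : M = payR T R P S ε u α ∨ M = payP T R P S ε u α) :
    (noisy χ M ACD ACD + noisy χ M ACD ACC
        - noisy χ M ACC ACD - noisy χ M ACC ACC
      = χ * (2 - χ) * ((T - R) + (P - S))) ∧
    (T > R → P > S → 0 < χ → RiskDom (noisy χ M) ACD ACC) ∧
    (χ = 0 →
      noisy χ M ACD ACD + noisy χ M ACD ACC
        - noisy χ M ACC ACD - noisy χ M ACC ACC = 0) := by
  have hGame : IsCommitmentGame T R P S M := by
    rcases hM with rfl | rfl
    · exact payR_isCommitmentGame T R P S ε u α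
    · exact payP_isCommitmentGame T R P S ε u α
  have hGap : riskDomGap (noisy χ M) ACD ACC = χ * (2 - χ) * ((T - R) + (P - S)) :=
    hGame.riskDomGap_noisy_ACD_ACC χ
  refine ⟨hGap, fun hTR hPS hχ_pos => ?_,
    fun hχ_zero => by simpa [riskDomGap, hχ_zero] using hGap⟩
  rw [riskDom_iff_riskDomGap_pos, hGap]
  have h2χ : 0 < 2 - χ := by linarith [hχ.2]
  have hTRPS : 0 < (T - R) + (P - S) := by linarith
  positivity

/-- **Participation noise breaks the tie between ACD and ACC in favour of ACD.**
For `Π ∈ {Π_R, Π_P}` and any `χ ∈ [0,1]`, the noisy matrix `Π̃` satisfies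
`Π̃(ACD,ACD) + Π̃(ACD,ACC) − Π̃(ACC,ACD) − Π̃(ACC,ACC) = χ(2−χ)((T−R)+(P−S))`.
Hence if `T > R` and `P > S` then ACD is risk-dominant against ACC for every
`χ ∈ (0,1]`, while for `χ = 0` the two strategies are neutral. -/
theorem noise_breaks_tie_ACD_ACC (T R P S ε u α χ : ℝ)
    (hα : 0 ≤ α ∧ α ≤ 1) (hχ : 0 ≤ χ ∧ χ ≤ 1)
    (M : Strat → Strat → ℝ)
    (hM : M = payR T R P S ε u α ∨ M = payP T R P S ε u α) :
    (noisy χ M ACD ACD + noisy χ M ACD ACC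
        - noisy χ M ACC ACD - noisy χ M ACC ACC
      = χ * (2 - χ) * ((T - R) + (P - S))) ∧
    (T > R → P > S → 0 < χ → RiskDom (noisy χ M) ACD ACC) ∧
    (χ = 0 →
      noisy χ M ACD ACD + noisy χ M ACD ACC
        - noisy χ M ACC ACD - noisy χ M ACC ACC = 0) :=
  noise_breaks_tie_ACD_ACC_general T R P S ε u α χ hχ M hM
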